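/- arXiv:2201.09991 — 5 statements merged into one kernel-verified Lean document; each statement's English description precedes it below -/
import Mathlib

section
/- Translation invariance of parallelogram closure: if K₁P₁ R K₂P₂ and P₁L₁ R P₂L₂ (same length, same direction relation), then ‖K₁L₁‖ = ‖K₂L₂‖. -/
/-- AB R CD iff (A = B and C = D) or (‖AB‖ = ‖CD‖ and ⟪AB,CD⟫ = ‖AB‖·‖CD‖). -/
def ArrowRel {P : Type*} (inner : P → P → P → P → ℝ) (X Y : P × P) : Prop :=
  (X.1 = X.2 ∧ Y.1 = Y.2) ∨
  (Real.sqrt (inner X.1 X.2 X.1 X.2) = Real.sqrt (inner Y.1 Y.2 Y.1 Y.2) ∧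
    inner X.1 X.2 Y.1 Y.2 =
      Real.sqrt (inner X.1 X.2 X.1 X.2) * Real.sqrt (inner Y.1 Y.2 Y.1 Y.2))

/-- Translation invariance of parallelogram closure:
if K₁P₁ R K₂P₂ and P₁L₁ R P₂L₂ then ‖K₁L₁‖ = ‖K₂L₂‖. -/
theorem arrow_parallelogram_measure {P : Type*} (inner : P → P → P → P → ℝ)
    (hpos : ∀ A B : P, 0 ≤ inner A B A B)
    (hdef : ∀ A B : P, inner A B A B = 0 ↔ A = B)
    (hsymm : ∀ A B C D : P, inner A B C D = inner C D A B)
    (hadd : ∀ A B C L M : P, inner A C L M = inner A B L M + inner B C L M)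
    (hneg : ∀ A B C D : P, inner B A C D = - inner A B C D)
    (hsubst : ∀ A B C D E F G H : P,
      ArrowRel inner (A, B) (C, D) → ArrowRel inner (E, F) (G, H) →
        inner A B E F = inner C D G H)
    (K₁ P₁ L₁ K₂ P₂ L₂ : P)
    (h1 : ArrowRel inner (K₁, P₁) (K₂, P₂))
    (h2 : ArrowRel inner (P₁, L₁) (P₂, L₂)) :
    Real.sqrt (inner K₁ L₁ K₁ L₁) = Real.sqrt (inner K₂ L₂ K₂ L₂) := by
  have e11 := hsubst K₁ P₁ K₂ P₂ K₁ P₁ K₂ P₂ h1 h1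
  have e12 := hsubst K₁ P₁ K₂ P₂ P₁ L₁ P₂ L₂ h1 h2
  have e21 := hsubst P₁ L₁ P₂ L₂ K₁ P₁ K₂ P₂ h2 h1
  have e22 := hsubst P₁ L₁ P₂ L₂ P₁ L₁ P₂ L₂ h2 h2
  have expand : ∀ K Q L : P, inner K L K L =
      inner K Q K Q + inner K Q Q L + (inner Q L K Q + inner Q L Q L) := by
    intro K Q L
    rw [hadd K Q L K L, hsymm K Q K L, hadd K Q L K Q, hsymm Q L K L,
      hadd K Q L Q L]
    ring
  have key : inner K₁ L₁ K₁ L₁ = inner K₂ L₂ K₂ L₂ := by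
    rw [expand K₁ P₁ L₁, expand K₂ P₂ L₂, e11, e12, e21, e22]
  rw [key]
end

section
/- If K₁P₁ R K₂P₂ and P₁L₁ R P₂L₂, then ⟪K₁L₁, K₂L₂⟫ = ⟪K₁L₁, K₁L₁⟫; combined with ‖K₁L₁‖ = ‖K₂L₂‖ this yields K₁L₁ R K₂L₂ (the sum of equivalent arrows is equivalent). -/
/-- The sum of equivalent arrows is equivalent: if K₁P₁ R K₂P₂ and P₁L₁ R P₂L₂
then ⟪K₁L₁,K₂L₂⟫ = ⟪K₁L₁,K₁L₁⟫ and K₁L₁ R K₂L₂. -/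
theorem arrow_sum_of_equiv_is_equiv {P : Type*} (inner : P → P → P → P → ℝ)
    (hpos : ∀ A B : P, 0 ≤ inner A B A B)
    (hdef : ∀ A B : P, inner A B A B = 0 ↔ A = B)
    (hsymm : ∀ A B C D : P, inner A B C D = inner C D A B)
    (hadd : ∀ A B C L M : P, inner A C L M = inner A B L M + inner B C L M)
    (hneg : ∀ A B C D : P, inner B A C D = - inner A B C D)
    (hsubst : ∀ A B C D E F G H : P,
      ArrowRel inner (A, B) (C, D) → ArrowRel inner (E, F) (G, H) →
        inner A B E F = inner C D G H)
    (K₁ P₁ L₁ K₂ P₂ L₂ : P)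
    (h1 : ArrowRel inner (K₁, P₁) (K₂, P₂))
    (h2 : ArrowRel inner (P₁, L₁) (P₂, L₂)) :
    inner K₁ L₁ K₂ L₂ = inner K₁ L₁ K₁ L₁ ∧
    ArrowRel inner (K₁, L₁) (K₂, L₂) := by
  have hrefl : ∀ A B : P, ArrowRel inner (A, B) (A, B) := fun A B =>
    Or.inr ⟨rfl, (Real.mul_self_sqrt (hpos A B)).symm⟩
  have hARsymm : ∀ A B C D : P, ArrowRel inner (A, B) (C, D) →
      ArrowRel inner (C, D) (A, B) := by
    intro A B C D h
    rcases h with ⟨ha, hb⟩ | ⟨ha, hb⟩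
    · exact Or.inl ⟨hb, ha⟩
    · exact Or.inr ⟨ha.symm, by
        simp only at ha hb ⊢
        rw [hsymm C D A B, hb, mul_comm]⟩
  have hadd2 : ∀ A B L M N : P, inner A B L N = inner A B L M + inner A B M N := by
    intro A B L M N
    rw [hsymm A B L N, hadd L M N A B, hsymm L M A B, hsymm M N A B]
  have key : ∀ X Y Z W V U : P, inner X Z W U =
      inner X Y W V + inner X Y V U + (inner Y Z W V + inner Y Z V U) := by
    intro X Y Z W V U
    rw [hadd X Y Z W U, hadd2 X Y W V U, hadd2 Y Z W V U]
  have e1 : inner K₁ P₁ K₂ P₂ = inner K₁ P₁ K₁ P₁ :=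
    hsubst _ _ _ _ _ _ _ _ (hrefl K₁ P₁) (hARsymm _ _ _ _ h1)
  have e2 : inner P₁ L₁ P₂ L₂ = inner P₁ L₁ P₁ L₁ :=
    hsubst _ _ _ _ _ _ _ _ (hrefl P₁ L₁) (hARsymm _ _ _ _ h2)
  have e3 : inner K₁ P₁ P₂ L₂ = inner K₁ P₁ P₁ L₁ :=
    hsubst _ _ _ _ _ _ _ _ (hrefl K₁ P₁) (hARsymm _ _ _ _ h2)
  have e4 : inner P₁ L₁ K₂ P₂ = inner P₁ L₁ K₁ P₁ :=
    hsubst _ _ _ _ _ _ _ _ (hrefl P₁ L₁) (hARsymm _ _ _ _ h1)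
  have e5 : inner K₂ P₂ K₂ P₂ = inner K₁ P₁ K₁ P₁ :=
    hsubst _ _ _ _ _ _ _ _ (hARsymm _ _ _ _ h1) (hARsymm _ _ _ _ h1)
  have e6 : inner P₂ L₂ P₂ L₂ = inner P₁ L₁ P₁ L₁ :=
    hsubst _ _ _ _ _ _ _ _ (hARsymm _ _ _ _ h2) (hARsymm _ _ _ _ h2)
  have e7 : inner K₂ P₂ P₂ L₂ = inner K₁ P₁ P₁ L₁ :=
    hsubst _ _ _ _ _ _ _ _ (hARsymm _ _ _ _ h1) (hARsymm _ _ _ _ h2)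
  have e8 : inner P₂ L₂ K₂ P₂ = inner P₁ L₁ K₁ P₁ :=
    hsubst _ _ _ _ _ _ _ _ (hARsymm _ _ _ _ h2) (hARsymm _ _ _ _ h1)
  have main : inner K₁ L₁ K₂ L₂ = inner K₁ L₁ K₁ L₁ := by
    rw [key K₁ P₁ L₁ K₂ P₂ L₂, key K₁ P₁ L₁ K₁ P₁ L₁, e1, e2, e3, e4]
  have norm_eq : inner K₂ L₂ K₂ L₂ = inner K₁ L₁ K₁ L₁ := by
    rw [key K₂ P₂ L₂ K₂ P₂ L₂, key K₁ P₁ L₁ K₁ P₁ L₁, e5, e6, e7, e8]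
  refine ⟨main, Or.inr ⟨?_, ?_⟩⟩
  · simp only
    rw [norm_eq]
  · simp only
    rw [main, norm_eq, Real.mul_self_sqrt (hpos K₁ L₁)]
end

section
/- Cauchy–Schwarz inequality for arrow spaces: for any arrows OG and AB, ⟪OG,AB⟫² ≤ ⟪OG,OG⟫ · ⟪AB,AB⟫. -/
/-- Cauchy–Schwarz inequality for arrow spaces:
⟪OG,AB⟫² ≤ ⟪OG,OG⟫·⟪AB,AB⟫. -/
theorem arrow_cauchy_schwarz {P : Type*} (inner : P → P → P → P → ℝ)
    (hpos : ∀ A B : P, 0 ≤ inner A B A B)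
    (hdef : ∀ A B : P, inner A B A B = 0 ↔ A = B)
    (hsymm : ∀ A B C D : P, inner A B C D = inner C D A B)
    (hadd : ∀ A B C L M : P, inner A C L M = inner A B L M + inner B C L M)
    (hneg : ∀ A B C D : P, inner B A C D = - inner A B C D)
    (hsubst : ∀ A B C D E F G H : P,
      ArrowRel inner (A, B) (C, D) → ArrowRel inner (E, F) (G, H) →
        inner A B E F = inner C D G H)
    (htransport : ∀ A B O : P, ∃ Q : P, ArrowRel inner (O, Q) (A, B))
    (O G A B : P) :
    (inner O G A B) ^ 2 ≤ inner O G O G * inner A B A B := by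
  -- reflexivity of ArrowRel
  have hrefl : ∀ X Y : P, ArrowRel inner (X, Y) (X, Y) := by
    intro X Y
    by_cases h : X = Y
    · exact Or.inl ⟨h, h⟩
    · exact Or.inr ⟨rfl, (Real.mul_self_sqrt (hpos X Y)).symm⟩
  have hzero : ∀ S X Y : P, inner S S X Y = 0 := by
    intro S X Y
    have := hneg S S X Y
    linarith
  -- n-fold repetition of an arrow starting at S
  have key : ∀ (n : ℕ) (S A' B' : P), ∃ T : P, ∀ X Y : P,
      inner S T X Y = n * inner A' B' X Y := by
    intro n S A' B'
    induction n with
    | zero =>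
      exact ⟨S, fun X Y => by simp [hzero S X Y]⟩
    | succ n ih =>
      obtain ⟨T, hT⟩ := ih
      obtain ⟨Q, hQ⟩ := htransport A' B' T
      refine ⟨Q, fun X Y => ?_⟩
      have h1 : inner T Q X Y = inner A' B' X Y :=
        hsubst T Q A' B' X Y X Y hQ (hrefl X Y)
      have h2 := hadd S T Q X Y
      rw [h2, hT X Y, h1]
      have hc : ((n+1 : ℕ):ℝ) = (n:ℝ) + 1 := by push_cast; ring
      rw [hc]; ring
  set a := inner O G O G with ha_def
  set b := inner A B A B with hb_def
  set c := inner O G A B with hc_def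
  -- the quadratic inequality for natural combinations
  have quad : ∀ (U V : P) (n m : ℕ),
      0 ≤ (n:ℝ)^2 * inner U V U V + 2*n*m * inner U V A B + (m:ℝ)^2 * b := by
    intro U V n m
    obtain ⟨T1, hT1⟩ := key n U U V
    obtain ⟨T2, hT2⟩ := key m T1 A B
    have hcomb : ∀ X Y : P, inner U T2 X Y = n * inner U V X Y + m * inner A B X Y := by
      intro X Y
      rw [hadd U T1 T2 X Y, hT1 X Y, hT2 X Y]
    have h1 : inner U T2 U T2 = (n:ℝ)^2 * inner U V U V + 2*n*m * inner U V A B + (m:ℝ)^2 * b := by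
      have e1 := hcomb U T2
      have e2 : inner U V U T2 = n * inner U V U V + m * inner U V A B := by
        rw [hsymm U V U T2, hcomb U V, hsymm U V A B]
      have e3 : inner A B U T2 = n * inner U V A B + m * b := by
        rw [hsymm A B U T2, hcomb A B]
      rw [e1, e2, e3]
      ring
    have := hpos U T2
    rw [h1] at this
    exact this
  have hGO : inner G O G O = a := by
    rw [hneg O G G O, hsymm O G G O, hneg O G O G]; ring
  have hGOAB : inner G O A B = -c := hneg O G A B
  -- absolute value form
  have habs : ∀ n m : ℕ, 2*(n:ℝ)*m*|c| ≤ (n:ℝ)^2 * a + (m:ℝ)^2 * b := by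
    intro n m
    have h1 := quad O G n m
    have h2 := quad G O n m
    rw [hGO, hGOAB] at h2
    rcases abs_cases c with ⟨h, _⟩ | ⟨h, _⟩ <;> rw [h] <;> nlinarith
  -- rational form
  have hrat : ∀ q : ℚ, 0 ≤ q → 0 ≤ a * (q:ℝ)^2 - 2 * |c| * (q:ℝ) + b := by
    intro q hq
    set n : ℕ := q.num.toNat
    set m : ℕ := q.den
    have hm : (0:ℝ) < m := by exact_mod_cast q.pos
    have hn : (n:ℝ) = (q:ℝ) * m := by
      have h1 : ((n:ℤ):ℝ) = ((q.num:ℤ):ℝ) := by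
        norm_cast
        exact Int.toNat_of_nonneg (Rat.num_nonneg.2 hq)
      have h2 : ((q.num:ℤ):ℝ) = (q:ℝ) * (q.den:ℝ) := by
        rw [Rat.cast_def]
        field_simp
      push_cast at h1 h2 ⊢
      rw [h1, h2]
    have h := habs n m
    rw [hn] at h
    nlinarith [mul_pos hm hm, abs_nonneg c]
  have ha0 : 0 ≤ a := hpos O G
  rcases eq_or_lt_of_le ha0 with ha | ha
  · -- a = 0 : O = G, c = 0
    have hOG : O = G := (hdef O G).1 ha.symm
    have hc0 : c = 0 := by
      rw [hc_def, hOG]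
      exact hzero G A B
    rw [hc0, ← ha]
    norm_num
  · -- a > 0 : epsilon argument
    have : c^2 ≤ a * b := by
      refine le_of_forall_pos_le_add (fun ε hε => ?_)
      set δ : ℝ := Real.sqrt ε / a with hδ_def
      have hδ : 0 < δ := div_pos (Real.sqrt_pos.2 hε) ha
      obtain ⟨q, hq1, hq2⟩ := exists_rat_btwn (lt_add_of_pos_right (|c|/a) hδ)
      have hq0 : (0:ℚ) ≤ q := by
        have : (0:ℝ) ≤ |c|/a := div_nonneg (abs_nonneg c) ha.le
        exact_mod_cast this.trans hq1.le
      have hquad := hrat q hq0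
      have haδ' : a * δ = Real.sqrt ε := by
        rw [hδ_def]; field_simp
      have haδ : (a * δ)^2 = ε := by
        rw [haδ']; exact Real.sq_sqrt hε.le
      have hca : a * (|c|/a) = |c| := by field_simp
      have h1 : a * (q:ℝ) - |c| < a * δ := by
        nlinarith [mul_lt_mul_of_pos_left hq2 ha]
      have h2 : 0 < a * (q:ℝ) - |c| := by
        nlinarith [mul_lt_mul_of_pos_left hq1 ha]
      nlinarith [sq_abs c, hquad, mul_le_mul h1.le h1.le h2.le (by positivity : (0:ℝ) ≤ a * δ)]
    calc c^2 ≤ a * b := this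
end

section
/- In the quotient vector structure on equivalence classes of arrows, vector addition is commutative: [AB] + [CD] = [CD] + [AB], where addition of classes is defined via parallel transport to a common point. -/
/-- Commutativity of vector addition on equivalence classes of arrows:
if [AB] + [CD] is computed as [K₁L₁] via K₁P₁ R AB, P₁L₁ R CD, and
[CD] + [AB] is computed as [K₂L₂] via K₂P₂ R CD, P₂L₂ R AB, then
K₁L₁ R K₂L₂, i.e. [AB] + [CD] = [CD] + [AB]. -/
theorem arrow_class_add_comm {P : Type*} (inner : P → P → P → P → ℝ)
    (hpos : ∀ A B : P, 0 ≤ inner A B A B)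
    (hdef : ∀ A B : P, inner A B A B = 0 ↔ A = B)
    (hsymm : ∀ A B C D : P, inner A B C D = inner C D A B)
    (hadd : ∀ A B C L M : P, inner A C L M = inner A B L M + inner B C L M)
    (hneg : ∀ A B C D : P, inner B A C D = - inner A B C D)
    (hsubst : ∀ A B C D E F G H : P,
      ArrowRel inner (A, B) (C, D) → ArrowRel inner (E, F) (G, H) →
        inner A B E F = inner C D G H)
    (hpar : ∀ A B Q : P, A ≠ B →
      (∃! K : P, ArrowRel inner (Q, K) (A, B)) ∧
      (∃! K' : P, ArrowRel inner (K', Q) (A, B)))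
    (A B C D K₁ P₁ L₁ K₂ P₂ L₂ : P)
    (h1 : ArrowRel inner (K₁, P₁) (A, B))
    (h2 : ArrowRel inner (P₁, L₁) (C, D))
    (h3 : ArrowRel inner (K₂, P₂) (C, D))
    (h4 : ArrowRel inner (P₂, L₂) (A, B)) :
    ArrowRel inner (K₁, L₁) (K₂, L₂) := by
  -- bilinear expansion through a midpoint on each side
  have exp : ∀ X Y Z X' Y' Z' : P, inner X Z X' Z' =
      inner X Y X' Y' + inner X Y Y' Z' + inner Y Z X' Y' + inner Y Z Y' Z' := by
    intro X Y Z X' Y' Z'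
    have h₁ := hadd X Y Z X' Z'
    have h₂ := hadd X' Y' Z' X Y
    have h₃ := hadd X' Y' Z' Y Z
    have s₁ := hsymm X Y X' Z'
    have s₂ := hsymm Y Z X' Z'
    have s₃ := hsymm X' Y' X Y
    have s₄ := hsymm Y' Z' X Y
    have s₅ := hsymm X' Y' Y Z
    have s₆ := hsymm Y' Z' Y Z
    linarith
  have q11 := hsubst K₁ P₁ A B K₂ P₂ C D h1 h3
  have q12 := hsubst K₁ P₁ A B P₂ L₂ A B h1 h4
  have q21 := hsubst P₁ L₁ C D K₂ P₂ C D h2 h3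
  have q22 := hsubst P₁ L₁ C D P₂ L₂ A B h2 h4
  have r11 := hsubst K₁ P₁ A B K₁ P₁ A B h1 h1
  have r12 := hsubst K₁ P₁ A B P₁ L₁ C D h1 h2
  have r21 := hsubst P₁ L₁ C D K₁ P₁ A B h2 h1
  have r22 := hsubst P₁ L₁ C D P₁ L₁ C D h2 h2
  have t11 := hsubst K₂ P₂ C D K₂ P₂ C D h3 h3
  have t12 := hsubst K₂ P₂ C D P₂ L₂ A B h3 h4
  have t21 := hsubst P₂ L₂ A B K₂ P₂ C D h4 h3
  have t22 := hsubst P₂ L₂ A B P₂ L₂ A B h4 h4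
  have hs := hsymm A B C D
  set s : ℝ := inner A B A B + 2 * inner A B C D + inner C D C D with hs_def
  have e12 : inner K₁ L₁ K₂ L₂ = s := by
    rw [exp K₁ P₁ L₁ K₂ P₂ L₂, q11, q12, q21, q22]; linarith
  have e11 : inner K₁ L₁ K₁ L₁ = s := by
    rw [exp K₁ P₁ L₁ K₁ P₁ L₁, r11, r12, r21, r22]; linarith
  have e22 : inner K₂ L₂ K₂ L₂ = s := by
    rw [exp K₂ P₂ L₂ K₂ P₂ L₂, t11, t12, t21, t22]; linarith
  by_cases hz : s = 0
  · left
    exact ⟨(hdef K₁ L₁).1 (by rw [e11, hz]),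
           (hdef K₂ L₂).1 (by rw [e22, hz])⟩
  · right
    refine ⟨by rw [show inner (K₁,L₁).1 (K₁,L₁).2 (K₁,L₁).1 (K₁,L₁).2 = s from e11,
                   show inner (K₂,L₂).1 (K₂,L₂).2 (K₂,L₂).1 (K₂,L₂).2 = s from e22], ?_⟩
    show inner K₁ L₁ K₂ L₂ = Real.sqrt (inner K₁ L₁ K₁ L₁) * Real.sqrt (inner K₂ L₂ K₂ L₂)
    rw [e11, e22, e12, Real.mul_self_sqrt (by rw [← e11]; exact hpos K₁ L₁)]
end

section
/- In the quotient vector structure on equivalence classes of arrows, scalar multiplication distributes over scalar addition: (t + s)·[AB] = t·[AB] + s·[AB]. -/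
/-- Distributivity of scalar multiplication over scalar addition on classes:
(t+s)·[AB] = t·[AB] + s·[AB]. Here t·[AB] + s·[AB] is computed as [AD] where
AK = (t)·AB and KD R (s)·AB, and the conclusion says AD R (t+s)·AB. -/
theorem arrow_class_add_smul_distrib {P : Type*} (inner : P → P → P → P → ℝ)
    (hpos : ∀ A B : P, 0 ≤ inner A B A B)
    (hdef : ∀ A B : P, inner A B A B = 0 ↔ A = B)
    (hsymm : ∀ A B C D : P, inner A B C D = inner C D A B)
    (hadd : ∀ A B C L M : P, inner A C L M = inner A B L M + inner B C L M)
    (hneg : ∀ A B C D : P, inner B A C D = - inner A B C D)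
    (smul : ℝ → P → P → P)
    (hscal : ∀ (t : ℝ) (A B C D : P), inner A (smul t A B) C D = t * inner A B C D)
    (hsmul_zero : ∀ A B : P, smul 0 A B = A)
    (hsmul_degenerate : ∀ (t : ℝ) (A : P), smul t A A = A)
    (hsmul_norm : ∀ (t : ℝ) (A B : P),
      Real.sqrt (inner A (smul t A B) A (smul t A B)) = |t| * Real.sqrt (inner A B A B))
    (hsmul_pos : ∀ (t : ℝ) (A B : P), 0 < t →
      inner A B A (smul t A B) =
        Real.sqrt (inner A B A B) * Real.sqrt (inner A (smul t A B) A (smul t A B)))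
    (hsmul_neg : ∀ (t : ℝ) (A B : P), t < 0 →
      inner A B A (smul t A B) =
        -(Real.sqrt (inner A B A B) * Real.sqrt (inner A (smul t A B) A (smul t A B))))
    (hsubst : ∀ A B C D E F G H : P,
      ArrowRel inner (A, B) (C, D) → ArrowRel inner (E, F) (G, H) →
        inner A B E F = inner C D G H)
    (hpar : ∀ A B Q : P, A ≠ B →
      (∃! K : P, ArrowRel inner (Q, K) (A, B)) ∧
      (∃! K' : P, ArrowRel inner (K', Q) (A, B)))
    (t s : ℝ) (A B D : P)
    (hKD : ArrowRel inner (smul t A B, D) (A, smul s A B)) :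
    ArrowRel inner (A, D) (A, smul (t + s) A B) := by
  -- Reflexivity of ArrowRel
  have refl : ∀ X Y : P, ArrowRel inner (X, Y) (X, Y) := by
    intro X Y
    right
    exact ⟨rfl, (Real.mul_self_sqrt (hpos X Y)).symm⟩
  set K := smul t A B with hK
  set T := smul (t + s) A B with hT
  -- inner A D X Y = (t+s) * inner A B X Y
  have hDXY : ∀ X Y : P, inner A D X Y = (t + s) * inner A B X Y := by
    intro X Y
    have h1 : inner A D X Y = inner A K X Y + inner K D X Y := hadd A K D X Y
    have h2 : inner A K X Y = t * inner A B X Y := hscal t A B X Y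
    have h3 : inner K D X Y = inner A (smul s A B) X Y :=
      hsubst K D A (smul s A B) X Y X Y hKD (refl X Y)
    have h4 : inner A (smul s A B) X Y = s * inner A B X Y := hscal s A B X Y
    rw [h1, h2, h3, h4]; ring
  set b := inner A B A B with hb
  have hAD : inner A D A D = (t + s) ^ 2 * b := by
    rw [hDXY A D, hsymm A B A D, hDXY A B]; ring
  have hAT : inner A T A T = (t + s) ^ 2 * b := by
    rw [hT, hscal (t + s) A B A (smul (t + s) A B), hsymm A B A (smul (t + s) A B),
      hscal (t + s) A B A B]; ring
  have hADT : inner A D A T = (t + s) ^ 2 * b := by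
    rw [hDXY A T, hT, hsymm A B A (smul (t + s) A B), hscal (t + s) A B A B]; ring
  right
  constructor
  · rw [hAD, hAT]
  · rw [hADT, hAD, hAT, Real.mul_self_sqrt]
    have hb0 : 0 ≤ b := hpos A B
    positivity
end
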